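/- arXiv:1301.1393 — 4 statements merged into one kernel-verified Lean document; each statement's English description precedes it below -/
import Mathlib

section
/- For any ground formula F w.r.t. an interpretation I, if I satisfies F then I satisfies the reduct F^I, where the reduct replaces every maximal subformula not satisfied by I with ⊥. -/
/-- Ground formulas w.r.t. an interpretation: atoms (over object names), ⊤, ⊥,
∧, ∨, →, and quantified families ∀(S), ∃(S) where `S` assigns a ground formula
to each element of the universe (type `μ`). -/
inductive GFormula (β : Type u) (μ : Type v) : Type (max u v)
  | atom (b : β)
  | top
  | bot
  | and (F G : GFormula β μ)
  | or (F G : GFormula β μ)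
  | imp (F G : GFormula β μ)
  | fal (S : μ → GFormula β μ)
  | ex (S : μ → GFormula β μ)

/-- Satisfaction of a ground formula by a set of ground atoms. -/
def gsat (J : Set β) : GFormula β μ → Prop
  | .atom b => b ∈ J
  | .top => True
  | .bot => False
  | .and F G => gsat J F ∧ gsat J G
  | .or F G => gsat J F ∨ gsat J G
  | .imp F G => gsat J F → gsat J G
  | .fal S => ∀ m, gsat J (S m)
  | .ex S => ∃ m, gsat J (S m)

open Classical in
/-- The reduct of a ground formula relative to an interpretation (represented by
the set `I` of ground atoms it satisfies): every maximal subformula not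
satisfied by `I` is replaced by `⊥`. -/
noncomputable def reduct (I : Set β) : GFormula β μ → GFormula β μ
  | .atom b => if b ∈ I then .atom b else .bot
  | .top => .top
  | .bot => .bot
  | .and F G => if gsat I (.and F G) then .and (reduct I F) (reduct I G) else .bot
  | .or F G => if gsat I (.or F G) then .or (reduct I F) (reduct I G) else .bot
  | .imp F G => if gsat I (.imp F G) then .imp (reduct I F) (reduct I G) else .bot
  | .fal S => if gsat I (.fal S) then .fal (fun m => reduct I (S m)) else .bot
  | .ex S => if gsat I (.ex S) then .ex (fun m => reduct I (S m)) else .bot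

/-- if an interpretation `I` satisfies a ground formula `F`
(satisfaction of ground formulas depends only on the set of ground atoms
satisfied by the interpretation), then `I` satisfies the reduct `F^I`. -/
theorem stmt_1 {β : Type u} {μ : Type v} (I : Set β) (F : GFormula β μ)
    (h : gsat I F) : gsat I (reduct I F) := by
  suffices H : gsat I (reduct I F) ↔ gsat I F from H.mpr h
  clear h
  induction F with
  | atom b => simp only [reduct]; split <;> simp_all [gsat]
  | top => simp [reduct]
  | bot => simp [reduct]
  | and F G ihF ihG => simp only [reduct]; split <;> simp_all [gsat]
  | or F G ihF ihG => simp only [reduct]; split <;> simp_all [gsat]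
  | imp F G ihF ihG => simp only [reduct]; split <;> simp_all [gsat]
  | fal S ih => simp only [reduct]; split <;> simp_all [gsat]
  | ex S ih => simp only [reduct]; split <;> simp_all [gsat]
end

section
/- For any ground formula F w.r.t. an interpretation I and any set of ground atoms J ⊆ I^pred: if J satisfies the reduct F^I, then I satisfies F. -/
/-- for any ground formula `F` w.r.t. an interpretation `I`
(represented by its set `Ipred` of true ground atoms) and any set of ground
atoms `J ⊆ Ipred`, if `J` satisfies the reduct `F^I` then `I` satisfies `F`. -/
theorem stmt_2 {β : Type u} {μ : Type v} (Ipred J : Set β) (F : GFormula β μ)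
    (hJ : J ⊆ Ipred) (h : gsat J (reduct Ipred F)) : gsat Ipred F := by
  induction F with
  | atom b =>
    simp only [reduct] at h
    split at h
    · assumption
    · exact h.elim
  | top => trivial
  | bot => exact h
  | and F G ihF ihG =>
    simp only [reduct] at h; split at h
    · assumption
    · exact h.elim
  | or F G ihF ihG =>
    simp only [reduct] at h; split at h
    · assumption
    · exact h.elim
  | imp F G ihF ihG =>
    simp only [reduct] at h; split at h
    · assumption
    · exact h.elim
  | fal S ih =>
    simp only [reduct] at h; split at h
    · assumption
    · exact h.elim
  | ex S ih =>
    simp only [reduct] at h; split at h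
    · assumption
    · exact h.elim
end

section
/- In propositional logic, for any sets of atoms J ⊆ I and any formula F: J ⊨ F^I (the Ferraris reduct) if and only if I ⊨ F and J ⊨ F*, where F* is defined by: p* = p', an alternate atom that is true iff p ∈ J; (F∧G)* = F*∧G*; (F∨G)* = F*∨G*; (F→G)* = (F*→G*) ∧ (F→G), where (F→G) is evaluated with the original atoms under I. -/
/-- Propositional formulas over a set of atoms, with ⊤, ⊥, ∧, ∨, →. -/
inductive PForm (α : Type u) : Type u
  | atom (a : α)
  | top
  | bot
  | and (F G : PForm α)
  | or (F G : PForm α)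
  | imp (F G : PForm α)

/-- Classical satisfaction of a propositional formula by a set of atoms. -/
def psat (I : Set α) : PForm α → Prop
  | .atom a => a ∈ I
  | .top => True
  | .bot => False
  | .and F G => psat I F ∧ psat I G
  | .or F G => psat I F ∨ psat I G
  | .imp F G => psat I F → psat I G

open Classical in
/-- The Ferraris reduct `F^I`: each maximal subformula not satisfied by `I` is
replaced by `⊥`. -/
noncomputable def preduct (I : Set α) : PForm α → PForm α
  | .atom a => if a ∈ I then .atom a else .bot
  | .top => .top
  | .bot => .bot
  | .and F G => if psat I (.and F G) then .and (preduct I F) (preduct I G) else .bot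
  | .or F G => if psat I (.or F G) then .or (preduct I F) (preduct I G) else .bot
  | .imp F G => if psat I (.imp F G) then .imp (preduct I F) (preduct I G) else .bot

/-- The Ferraris star translation evaluated under the pair `(J, I)`: starred
atoms `p*` are true iff `p ∈ J`, `(F ∧ G)* = F* ∧ G*`, `(F ∨ G)* = F* ∨ G*`,
and `(F → G)* = (F* → G*) ∧ (F → G)` with the unstarred conjunct evaluated
under `I`. -/
def pstar (J I : Set α) : PForm α → Prop
  | .atom a => a ∈ J
  | .top => True
  | .bot => False
  | .and F G => pstar J I F ∧ pstar J I G
  | .or F G => pstar J I F ∨ pstar J I G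
  | .imp F G => (pstar J I F → pstar J I G) ∧ (psat I F → psat I G)

theorem pstar_psat {α : Type u} {J I : Set α} (hJI : J ⊆ I) (F : PForm α)
    (h : pstar J I F) : psat I F := by
  induction F with
  | atom a => exact hJI h
  | top => trivial
  | bot => exact h
  | and F G ihF ihG => exact ⟨ihF h.1, ihG h.2⟩
  | or F G ihF ihG => exact h.elim (fun x => Or.inl (ihF x)) (fun x => Or.inr (ihG x))
  | imp F G ihF ihG => exact h.2

/-- for sets of atoms `J ⊆ I` and any propositional formula `F`,
`J ⊨ F^I` iff (`I ⊨ F` and `F*` is true under `(J, I)`). -/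
theorem stmt_4 {α : Type u} (J I : Set α) (hJI : J ⊆ I) (F : PForm α) :
    psat J (preduct I F) ↔ (psat I F ∧ pstar J I F) := by
  induction F with
  | atom a =>
    simp only [preduct, psat, pstar]
    split <;> rename_i h <;> simp [psat, h]
  | top => simp [preduct, psat, pstar]
  | bot => simp [preduct, psat, pstar]
  | and F G ihF ihG =>
    simp only [preduct]
    split <;> rename_i h <;> simp_all [psat, pstar] <;> tauto
  | or F G ihF ihG =>
    have hF := pstar_psat hJI F
    have hG := pstar_psat hJI G
    simp only [preduct]
    split <;> rename_i h <;> simp_all [psat, pstar] <;> tauto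
  | imp F G ihF ihG =>
    have hF := pstar_psat hJI F
    have hG := pstar_psat hJI G
    simp only [preduct]
    split <;> rename_i h <;> simp_all [psat, pstar] <;> tauto
end

section
/- Simplified propositional coincidence theorem: over a finite set of atoms, let Π be a program of rules A₁ ∨ … ∨ A_l ← E₁ ∧ … ∧ E_m ∧ ¬E_{m+1} ∧ … ∧ ¬E_n, where each Aᵢ is an atom, each Eᵢ (i ≤ m) is an atom or a 'complex atom' given by an arbitrary function P(Atoms) → Bool, and each Eᵢ (i > m) is an atom or a monotone complex atom (v(J)=true and J ⊆ J' implies v(J')=true). Then a set of atoms I is an FLP stable model of Π if and only if I is a stable model under the two-valuation (SM-style) semantics where, for (J,I) with J ⊆ I, a complex atom occurring positively is evaluated as v(J) ∧ v(I), and implication bodies use the SM clause (B→H)* = (B*→H*) ∧ (B→H). -/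
/-- A body element: an atom or a 'complex atom' given by an arbitrary
truth-value function on sets of atoms. -/
inductive Elem (α : Type) : Type
  | atom (a : α)
  | cplx (v : Set α → Prop)

/-- A rule `A₁ ∨ … ∨ A_l ← E₁ ∧ … ∧ E_m ∧ ¬E_{m+1} ∧ … ∧ ¬E_n` with atomic
head disjuncts and body elements. -/
structure Rule (α : Type) where
  head : Finset α
  pos : List (Elem α)
  neg : List (Elem α)

/-- Truth of a body element under a set of atoms. -/
def esat {α : Type} (I : Set α) : Elem α → Prop
  | .atom a => a ∈ I
  | .cplx v => v I

/-- A complex-atom valuation is monotone. -/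
def monoV {α : Type} (v : Set α → Prop) : Prop :=
  ∀ J J' : Set α, J ⊆ J' → v J → v J'

def bodySat {α : Type} (I : Set α) (r : Rule α) : Prop :=
  (∀ e ∈ r.pos, esat I e) ∧ (∀ e ∈ r.neg, ¬ esat I e)

def headSat {α : Type} (I : Set α) (r : Rule α) : Prop :=
  ∃ a ∈ r.head, a ∈ I

def progSat {α : Type} (I : Set α) (P : List (Rule α)) : Prop :=
  ∀ r ∈ P, bodySat I r → headSat I r

/-- FLP stable model: `I` satisfies every rule and no `J ⊊ I` satisfies the
FLP reduct (the rules whose bodies are true under `I`, with bodies evaluated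
under the candidate `J` as well). -/
def flpStable {α : Type} (I : Set α) (P : List (Rule α)) : Prop :=
  progSat I P ∧
  ¬ ∃ J : Set α, J ⊂ I ∧
      ∀ r ∈ P, bodySat I r → (bodySat J r → headSat J r)

/-- Star evaluation of a positively occurring body element under `(J, I)`:
`p* = (p ∈ J)`; a complex atom is evaluated as `v(J) ∧ v(I)`. -/
def estar {α : Type} (J I : Set α) : Elem α → Prop
  | .atom a => a ∈ J
  | .cplx v => v J ∧ v I

/-- Star evaluation of a rule body under `(J, I)`: each negated element `¬E`
translates via the implication clause to `¬E* ∧ ¬E` (the latter under `I`). -/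
def bodyStar {α : Type} (J I : Set α) (r : Rule α) : Prop :=
  (∀ e ∈ r.pos, estar J I e) ∧ (∀ e ∈ r.neg, ¬ estar J I e ∧ ¬ esat I e)

/-- SM-style (two-valuation) stable model: `I` satisfies every rule and no
`J ⊊ I` satisfies the star-translated program relative to `I`, where each rule
translates via `(B → H)* = (B* → H*) ∧ (B → H)`. -/
def smStable {α : Type} (I : Set α) (P : List (Rule α)) : Prop :=
  progSat I P ∧
  ¬ ∃ J : Set α, J ⊂ I ∧
      ∀ r ∈ P, (bodyStar J I r → headSat J r) ∧ (bodySat I r → headSat I r)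

/-- over a finite set of atoms, for a program whose rules have
atomic head disjuncts, arbitrary (atomic or complex) positive body elements,
and negated body elements that are atoms or monotone complex atoms, a set of
atoms `I` is an FLP stable model iff it is an SM-style stable model. -/
theorem stmt_15 {α : Type} [Finite α] (P : List (Rule α))
    (hneg : ∀ r ∈ P, ∀ e ∈ r.neg,
      (∃ a, e = Elem.atom a) ∨ ∃ v, e = Elem.cplx v ∧ monoV v)
    (I : Set α) :
    flpStable I P ↔ smStable I P := by
  have key : ∀ J : Set α, J ⊆ I →
      ((∀ r ∈ P, bodySat I r → bodySat J r → headSat J r) ↔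
       (∀ r ∈ P, bodyStar J I r → headSat J r)) := by
    intro J hJI
    constructor
    · rintro h r hr ⟨hp, hn⟩
      have hbI : bodySat I r := by
        constructor
        · intro e he
          have := hp e he
          cases e with
          | atom a => exact hJI this
          | cplx v => exact this.2
        · intro e he; exact (hn e he).2
      have hbJ : bodySat J r := by
        constructor
        · intro e he
          have := hp e he
          cases e with
          | atom a => exact this
          | cplx v => exact this.1
        · intro e he
          have h1 := (hn e he).1
          have h2 := (hn e he).2
          rcases hneg r hr e he with ⟨a, rfl⟩ | ⟨v, rfl, hm⟩
          · exact h1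
          · intro hvJ
            exact h2 (hm J I hJI hvJ)
      exact h r hr hbI hbJ
    · intro h r hr hbI hbJ
      apply h r hr
      constructor
      · intro e he
        cases e with
        | atom a => exact hbJ.1 _ he
        | cplx v => exact ⟨hbJ.1 _ he, hbI.1 _ he⟩
      · intro e he
        refine ⟨?_, hbI.2 e he⟩
        cases e with
        | atom a => intro haJ; exact hbI.2 _ he (hJI haJ)
        | cplx v => rintro ⟨hvJ, hvI⟩; exact hbI.2 _ he hvI
  constructor
  · rintro ⟨hsat, hno⟩
    refine ⟨hsat, fun ⟨J, hJ, hall⟩ => hno ⟨J, hJ, fun r hr hbI hbJ => ?_⟩⟩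
    exact ((key J hJ.subset).mpr (fun r hr hbs => (hall r hr).1 hbs)) r hr hbI hbJ
  · rintro ⟨hsat, hno⟩
    exact ⟨hsat, fun ⟨J, hJ, hall⟩ =>
      hno ⟨J, hJ, fun r hr => ⟨(key J hJ.subset).mp hall r hr, hsat r hr⟩⟩⟩
end
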